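/- Let (X, 𝒜, μ) be a complete measure space endowed with a partial order ≤, let I ⊆ ℝ be a closed interval, and let q ∈ [1, ∞). Then the set L^q_≤(X, μ, I) of all elements of L^q(X, μ, ℝ) that possess a representative which is isotonic μ-almost everywhere (i.e., isotonic off some μ-null set) and takes values in I μ-almost everywhere, is a closed convex subset of L^q(X, μ, ℝ). -/

import Mathlib

/-!
Both conditions defining `isoLq` can be tested on any representative: being monotone off a null
set and lying in `I` almost everywhere are invariant under a.e. equality. Convex combinations with
nonnegative weights preserve monotonicity, and they preserve values in `I` because `I` is convex.
For closedness, a sequence converging in `L^q` has a subsequence converging almost everywhere; off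
a null set the limit is a pointwise limit of monotone functions with values in the closed set `I`.
-/

open MeasureTheory Filter Topology
open scoped ENNReal

/-- The elements of `L^q(X, μ, ℝ)` having a representative that is isotonic off a `μ`-null
set and takes values in `I` almost everywhere. -/
def isoLq {X : Type*} [MeasurableSpace X] [PartialOrder X]
    (μ : Measure X) (q : ℝ≥0∞) (I : Set ℝ) : Set (Lp ℝ q μ) :=
  {f | ∃ f₀ : X → ℝ, (⇑f) =ᵐ[μ] f₀ ∧
    (∃ N : Set X, μ N = 0 ∧ ∀ x ∉ N, ∀ y ∉ N, x ≤ y → f₀ x ≤ f₀ y) ∧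
    ∀ᵐ x ∂μ, f₀ x ∈ I}

section AEMonotone

variable {X β : Type*} [MeasurableSpace X] [Preorder X] [Preorder β] {μ : Measure X}
  {f g : X → β}

def AEMonotone (μ : Measure X) (f : X → β) : Prop :=
  ∃ s ∈ ae μ, MonotoneOn f s

lemma aeMonotone_iff_exists_null :
    AEMonotone μ f ↔ ∃ N : Set X, μ N = 0 ∧ ∀ x ∉ N, ∀ y ∉ N, x ≤ y → f x ≤ f y := by
  constructor
  · rintro ⟨s, hs, hf⟩
    exact ⟨sᶜ, mem_ae_iff.1 hs, fun x hx y hy hxy => hf (not_not.1 hx) (not_not.1 hy) hxy⟩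
  · rintro ⟨N, hN, hf⟩
    exact ⟨Nᶜ, compl_mem_ae_iff.2 hN, fun x hx y hy hxy => hf x hx y hy hxy⟩

lemma AEMonotone.congr (hg : AEMonotone μ g) (hfg : f =ᵐ[μ] g) : AEMonotone μ f := by
  obtain ⟨s, hs, hg⟩ := hg
  refine ⟨s ∩ {x | f x = g x}, inter_mem hs hfg, fun x hx y hy hxy => ?_⟩
  rw [hx.2, hy.2]
  exact hg hx.1 hy.1 hxy

lemma AEMonotone.add [Add β] [AddLeftMono β] [AddRightMono β] (hf : AEMonotone μ f)
    (hg : AEMonotone μ g) : AEMonotone μ fun x => f x + g x := by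
  obtain ⟨s, hs, hf⟩ := hf
  obtain ⟨t, ht, hg⟩ := hg
  exact ⟨s ∩ t, inter_mem hs ht,
    (hf.mono Set.inter_subset_left).add (hg.mono Set.inter_subset_right)⟩

lemma AEMonotone.const_smul {𝕜 : Type*} [Zero 𝕜] [Preorder 𝕜] [SMul 𝕜 β] [PosSMulMono 𝕜 β]
    (hf : AEMonotone μ f) {c : 𝕜} (hc : 0 ≤ c) : AEMonotone μ fun x => c • f x := by
  obtain ⟨s, hs, hf⟩ := hf
  exact ⟨s, hs, fun x hx y hy hxy => smul_le_smul_of_nonneg_left (hf hx hy hxy) hc⟩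

lemma aeMonotone_of_tendsto [TopologicalSpace β] [OrderClosedTopology β] {ι : Type*}
    [Countable ι] {l : Filter ι} [l.NeBot] {F : ι → X → β} (hF : ∀ i, AEMonotone μ (F i))
    (hlim : ∀ᵐ x ∂μ, Tendsto (fun i => F i x) l (𝓝 (f x))) : AEMonotone μ f := by
  choose s hs hFs using hF
  refine ⟨(⋂ i, s i) ∩ {x | Tendsto (fun i => F i x) l (𝓝 (f x))},
    inter_mem (countable_iInter_mem.2 hs) hlim, ?_⟩
  exact monotoneOn_of_frequently_monotoneOn_of_tendsto
    (Frequently.of_forall fun i => (hFs i).mono fun x hx => Set.mem_iInter.1 hx.1 i)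
    fun x hx => hx.2

end AEMonotone

section isoLq

variable {X : Type*} [MeasurableSpace X] [PartialOrder X] {μ : Measure X} {q : ℝ≥0∞}
  {I : Set ℝ}

lemma mem_isoLq_iff {f : Lp ℝ q μ} :
    f ∈ isoLq μ q I ↔ AEMonotone μ f ∧ ∀ᵐ x ∂μ, f x ∈ I := by
  constructor
  · rintro ⟨f₀, hf, hmono, hI⟩
    refine ⟨(aeMonotone_iff_exists_null.2 hmono).congr hf, ?_⟩
    filter_upwards [hf, hI] with x hx hxI
    rwa [hx]
  · rintro ⟨hmono, hI⟩
    exact ⟨f, EventuallyEq.rfl, aeMonotone_iff_exists_null.1 hmono, hI⟩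

theorem convex_isoLq (hI : Convex ℝ I) : Convex ℝ (isoLq μ q I) := by
  intro f hf g hg a b ha hb hab
  rw [mem_isoLq_iff] at hf hg ⊢
  have hcoe : ⇑(a • f + b • g) =ᵐ[μ] fun x => a • f x + b • g x := by
    filter_upwards [Lp.coeFn_add (a • f) (b • g), Lp.coeFn_smul a f, Lp.coeFn_smul b g]
      with x hadd hfx hgx
    simp only [hadd, Pi.add_apply, hfx, hgx, Pi.smul_apply]
  refine ⟨((hf.1.const_smul ha).add (hg.1.const_smul hb)).congr hcoe, ?_⟩
  filter_upwards [hcoe, hf.2, hg.2] with x hx hfx hgx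
  rw [hx]
  exact hI hfx hgx ha hb hab

theorem isClosed_isoLq [Fact (1 ≤ q)] (hI : IsClosed I) : IsClosed (isoLq μ q I) := by
  refine IsSeqClosed.isClosed fun F f hF hlim => ?_
  simp only [mem_isoLq_iff] at hF ⊢
  obtain ⟨ns, -, hae⟩ := (tendstoInMeasure_of_tendsto_Lp hlim).exists_seq_tendsto_ae
  refine ⟨aeMonotone_of_tendsto (fun i => (hF (ns i)).1) hae, ?_⟩
  filter_upwards [ae_all_iff.2 fun i => (hF (ns i)).2, hae] with x hxI hx
  exact hI.mem_of_tendsto hx (Eventually.of_forall hxI)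

end isoLq

theorem stmt_4_general {X : Type*} [MeasurableSpace X] [PartialOrder X]
    (μ : Measure X) (I : Set ℝ) (hIcl : IsClosed I) (hIint : I.OrdConnected)
    (q : ℝ≥0∞) [Fact (1 ≤ q)] :
    Convex ℝ (isoLq μ q I) ∧ IsClosed (isoLq μ q I) :=
  ⟨convex_isoLq hIint.convex, isClosed_isoLq hIcl⟩

/-- For a complete measure space `(X, 𝒜, μ)` with a partial order, a closed interval
`I ⊆ ℝ` and `q ∈ [1, ∞)`, the set `L^q_≤(X, μ, I)` of elements of `L^q(X, μ, ℝ)` having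
an essentially isotonic representative with values in `I` a.e. is a closed convex subset
of `L^q(X, μ, ℝ)`. -/
theorem stmt_4 {X : Type*} [MeasurableSpace X] [PartialOrder X]
    (μ : Measure X) [μ.IsComplete] (I : Set ℝ) (hIcl : IsClosed I) (hIint : I.OrdConnected)
    (q : ℝ≥0∞) [Fact (1 ≤ q)] (hq : q ≠ ∞) :
    Convex ℝ (isoLq μ q I) ∧ IsClosed (isoLq μ q I) :=
  stmt_4_general μ I hIcl hIint q
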